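/- If a sequent Γ ⇒ Δ is provable in Grz_Seq + cut, then Γ ⇒ Δ is provable in Grz_∞ + cut. -/

import Mathlib

/-- Modal formulas built from ⊥ and propositional variables using → and □. -/
inductive Fml : Type
  | bot : Fml
  | var : ℕ → Fml
  | imp : Fml → Fml → Fml
  | box : Fml → Fml
deriving DecidableEq

/-- A sequent `Γ ⇒ Δ`: a pair of finite multisets of formulas. -/
abbrev Sequent : Type := Multiset Fml × Multiset Fml

/-- The sequent calculus `Grz_Seq` (with the cut rule available when the
Boolean parameter is `true`, i.e. `GrzSeq true` is `Grz_Seq + cut` and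
`GrzSeq false` is `Grz_Seq`). -/
inductive GrzSeq : Bool → Sequent → Prop
  | ax (c : Bool) (Γ Δ : Multiset Fml) (A : Fml) :
      GrzSeq c (A ::ₘ Γ, A ::ₘ Δ)
  | axBot (c : Bool) (Γ Δ : Multiset Fml) :
      GrzSeq c (Fml.bot ::ₘ Γ, Δ)
  | impL {c : Bool} {Γ Δ : Multiset Fml} {A B : Fml} :
      GrzSeq c (B ::ₘ Γ, Δ) → GrzSeq c (Γ, A ::ₘ Δ) →
      GrzSeq c (Fml.imp A B ::ₘ Γ, Δ)
  | impR {c : Bool} {Γ Δ : Multiset Fml} {A B : Fml} :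
      GrzSeq c (A ::ₘ Γ, B ::ₘ Δ) → GrzSeq c (Γ, Fml.imp A B ::ₘ Δ)
  | refl {c : Bool} {Γ Δ : Multiset Fml} {B : Fml} :
      GrzSeq c (B ::ₘ Fml.box B ::ₘ Γ, Δ) → GrzSeq c (Fml.box B ::ₘ Γ, Δ)
  | boxGrz {c : Bool} (Γ : Multiset Fml) {Φ : Multiset Fml} {A : Fml} (Δ : Multiset Fml) :
      GrzSeq c (Fml.box (Fml.imp A (Fml.box A)) ::ₘ Φ.map Fml.box, ({A} : Multiset Fml)) →
      GrzSeq c (Γ + Φ.map Fml.box, Fml.box A ::ₘ Δ)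
  | cut {Γ Δ : Multiset Fml} {A : Fml} :
      GrzSeq true (Γ, A ::ₘ Δ) → GrzSeq true (A ::ₘ Γ, Δ) → GrzSeq true (Γ, Δ)

/-- Tags for the inference rules of `Grz_∞ (+ cut)`. -/
inductive RuleTag : Type
  | ax | axBot | impL | impR | refl | box | cut
deriving DecidableEq

/-- Local correctness of a rule application in `Grz_∞` (cut allowed when the
Boolean parameter is `true`): it relates the conclusion sequent, the rule tag
and the (optional) first and second premises.  For the rule `(□)`, the second
premise is its right premise. -/
inductive Rules : Bool → Sequent → RuleTag → Option Sequent → Option Sequent → Prop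
  | ax (c : Bool) (Γ Δ : Multiset Fml) (p : ℕ) :
      Rules c (Fml.var p ::ₘ Γ, Fml.var p ::ₘ Δ) RuleTag.ax none none
  | axBot (c : Bool) (Γ Δ : Multiset Fml) :
      Rules c (Fml.bot ::ₘ Γ, Δ) RuleTag.axBot none none
  | impL (c : Bool) (Γ Δ : Multiset Fml) (A B : Fml) :
      Rules c (Fml.imp A B ::ₘ Γ, Δ) RuleTag.impL
        (some (B ::ₘ Γ, Δ)) (some (Γ, A ::ₘ Δ))
  | impR (c : Bool) (Γ Δ : Multiset Fml) (A B : Fml) :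
      Rules c (Γ, Fml.imp A B ::ₘ Δ) RuleTag.impR
        (some (A ::ₘ Γ, B ::ₘ Δ)) none
  | refl (c : Bool) (Γ Δ : Multiset Fml) (B : Fml) :
      Rules c (Fml.box B ::ₘ Γ, Δ) RuleTag.refl
        (some (B ::ₘ Fml.box B ::ₘ Γ, Δ)) none
  | box (c : Bool) (Γ Φ Δ : Multiset Fml) (A : Fml) :
      Rules c (Γ + Φ.map Fml.box, Fml.box A ::ₘ Δ) RuleTag.box
        (some (Γ + Φ.map Fml.box, A ::ₘ Δ)) (some (Φ.map Fml.box, ({A} : Multiset Fml)))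
  | cut (Γ Δ : Multiset Fml) (A : Fml) :
      Rules true (Γ, Δ) RuleTag.cut (some (Γ, A ::ₘ Δ)) (some (A ::ₘ Γ, Δ))

/-- An ∞-proof in `Grz_∞` (`c = false`) or `Grz_∞ + cut` (`c = true`): a
possibly infinite tree (nodes are adressed by lists of Booleans, `false`
pointing to the first premise and `true` to the second premise) of sequents
together with applied rules, constructed according to the rules, whose leaves
are initial sequents, and in which every infinite branch passes through a
right premise of the rule `(□)` infinitely many times. -/
structure InfProof (c : Bool) : Type where
  node : List Bool → Option (Sequent × RuleTag)
  root_isSome : (node []).isSome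
  closed : ∀ (p : List Bool) (i : Bool), node p = none → node (p ++ [i]) = none
  correct : ∀ (p : List Bool) (s : Sequent) (r : RuleTag), node p = some (s, r) →
    Rules c s r ((node (p ++ [false])).map Prod.fst) ((node (p ++ [true])).map Prod.fst)
  guard : ∀ f : ℕ → Bool, (∀ n : ℕ, (node ((List.range n).map f)).isSome) →
    ∀ N : ℕ, ∃ n : ℕ, N ≤ n ∧ f n = true ∧
      (node ((List.range n).map f)).map Prod.snd = some RuleTag.box

/-- The sequent at the root of an ∞-proof. -/
def rootSeq {c : Bool} (π : InfProof c) : Sequent :=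
  ((π.node []).getD (((0 : Multiset Fml), (0 : Multiset Fml)), RuleTag.ax)).1

/-- A sequent is provable in `Grz_∞ (+ cut)` if it has an ∞-proof with that
sequent at the root. -/
def ProvableInf (c : Bool) (s : Sequent) : Prop := ∃ π : InfProof c, rootSeq π = s

/-- The number of right premises of the rule `(□)` strictly below the node
addressed by `p` in the ∞-proof `π`. -/
def countBR {c : Bool} (π : InfProof c) (p : List Bool) : ℕ :=
  ((List.range p.length).filter fun i =>
    p.getD i false && decide ((π.node (p.take i)).map Prod.snd = some RuleTag.box)).length

/-- `Frag n π τ` means that the `n`-fragments of `π` and `τ` coincide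
(`π ∼_n τ`): the trees agree on every node lying strictly before the `n`-th
right premise of `(□)` on its branch. -/
def Frag {c : Bool} (n : ℕ) (π τ : InfProof c) : Prop :=
  ∀ p : List Bool, countBR π p < n → π.node p = τ.node p

/-- The local pheight `|π|`: the length of the longest branch in the main
(1-)fragment of `π`. -/
noncomputable def pheight {c : Bool} (π : InfProof c) : ℕ :=
  sSup { n : ℕ | ∃ p : List Bool, p.length = n ∧ (π.node p).isSome ∧ countBR π p = 0 }

/-- Membership in `P_n`: the ∞-proof contains no applications of the cut rule
in its `n`-fragment. -/
def CutFreeIn {c : Bool} (n : ℕ) (π : InfProof c) : Prop :=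
  ∀ p : List Bool, countBR π p < n → (π.node p).map Prod.snd ≠ some RuleTag.cut

/-- A non-expansive mapping on ∞-proofs. -/
def NonExp {c : Bool} (u : InfProof c → InfProof c) : Prop :=
  ∀ (n : ℕ) (π π' : InfProof c), Frag n π π' → Frag n (u π) (u π')

/-- An adequate mapping on ∞-proofs: it preserves each `P_n`. -/
def Adequate {c : Bool} (u : InfProof c → InfProof c) : Prop :=
  ∀ (n : ℕ) (π : InfProof c), CutFreeIn n π → CutFreeIn n (u π)

namespace GrzAux

/-- The root node of an ∞-proof is `some (rootSeq π, r)` for some rule `r`. -/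
lemma exists_root {c : Bool} (π : InfProof c) : ∃ r, π.node [] = some (rootSeq π, r) := by
  obtain ⟨x, hx⟩ := Option.isSome_iff_exists.mp π.root_isSome
  exact ⟨x.2, by simp [rootSeq, hx]⟩

lemma mapFst_root {c : Bool} (π : InfProof c) :
    (π.node []).map Prod.fst = some (rootSeq π) := by
  obtain ⟨r, h⟩ := exists_root π; simp [h]

/-- Node function of a leaf proof. -/
def leafNode (s : Sequent) (r : RuleTag) : List Bool → Option (Sequent × RuleTag)
  | [] => some (s, r)
  | _ :: _ => none

/-- Node function of a one-premise rule application. -/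
def node1 (s : Sequent) (r : RuleTag) (t : List Bool → Option (Sequent × RuleTag)) :
    List Bool → Option (Sequent × RuleTag)
  | [] => some (s, r)
  | false :: q => t q
  | true :: _ => none

/-- Node function of a two-premise rule application. -/
def node2 (s : Sequent) (r : RuleTag) (t₁ t₂ : List Bool → Option (Sequent × RuleTag)) :
    List Bool → Option (Sequent × RuleTag)
  | [] => some (s, r)
  | false :: q => t₁ q
  | true :: q => t₂ q

lemma prefix_succ (f : ℕ → Bool) (n : ℕ) :
    (List.range (n+1)).map f = f 0 :: (List.range n).map (fun k => f (k+1)) := by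
  rw [List.range_succ_eq_map, List.map_cons, List.map_map]
  rfl

lemma prefix_add (f : ℕ → Bool) (k n : ℕ) :
    (List.range (k+n)).map f = (List.range k).map f ++ (List.range n).map (fun i => f (k+i)) := by
  rw [List.range_add, List.map_append, List.map_map]
  rfl

/-- Guard transfer: if below some fixed prefix of the branch `f` the tree `node`
is a copy of the ∞-proof `π`, then the branch hits `(□)`-right premises beyond
any bound. -/
lemma guard_of_shift {c : Bool} (π : InfProof c)
    (node : List Bool → Option (Sequent × RuleTag)) (k : ℕ) (f : ℕ → Bool)
    (hpre : ∀ q, node ((List.range k).map f ++ q) = π.node q)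
    (hf : ∀ n, (node ((List.range n).map f)).isSome) (N : ℕ) :
    ∃ n, N ≤ n ∧ f n = true ∧
      (node ((List.range n).map f)).map Prod.snd = some RuleTag.box := by
  set g : ℕ → Bool := fun i => f (k+i) with hg
  have key : ∀ n, node ((List.range (k+n)).map f) = π.node ((List.range n).map g) := by
    intro n; rw [prefix_add, hpre]
  obtain ⟨n, hn, hgn, ht⟩ := π.guard g (fun n => by rw [← key]; exact hf (k+n)) N
  exact ⟨k+n, le_trans hn (Nat.le_add_left n k), hgn, by rw [key]; exact ht⟩

/-- Leaf ∞-proof. -/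
def leaf (c : Bool) (s : Sequent) (r : RuleTag) (h : Rules c s r none none) : InfProof c where
  node := leafNode s r
  root_isSome := rfl
  closed p i hp := by
    cases p with
    | nil => simp [leafNode] at hp
    | cons b q => rfl
  correct p s' r' hp := by
    cases p with
    | nil =>
      simp only [leafNode] at hp
      obtain ⟨rfl, rfl⟩ : s' = s ∧ r' = r := by
        injection hp with hp; exact ⟨(congrArg Prod.fst hp).symm, (congrArg Prod.snd hp).symm⟩
      simpa [leafNode] using h
    | cons b q => simp [leafNode] at hp
  guard f hf N := by
    have h1 := hf 1
    have : (List.range 1).map f = [f 0] := rfl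
    rw [this] at h1
    simp [leafNode] at h1

/-- One-premise rule application. -/
def rule1 (c : Bool) (s : Sequent) (r : RuleTag) (π₁ : InfProof c)
    (h : Rules c s r (some (rootSeq π₁)) none) : InfProof c where
  node := node1 s r π₁.node
  root_isSome := rfl
  closed p i hp := by
    cases p with
    | nil => simp [node1] at hp
    | cons b q =>
      cases b with
      | false => exact π₁.closed q i hp
      | true => rfl
  correct p s' r' hp := by
    cases p with
    | nil =>
      simp only [node1] at hp
      obtain ⟨rfl, rfl⟩ : s' = s ∧ r' = r := by
        injection hp with hp; exact ⟨(congrArg Prod.fst hp).symm, (congrArg Prod.snd hp).symm⟩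
      simpa [node1, mapFst_root] using h
    | cons b q =>
      cases b with
      | false => exact π₁.correct q s' r' hp
      | true => simp [node1] at hp
  guard f hf N := by
    cases hb : f 0 with
    | true =>
      have h1 := hf 1
      have : (List.range 1).map f = [f 0] := rfl
      rw [this, hb] at h1
      simp [node1] at h1
    | false =>
      refine guard_of_shift π₁ (node1 s r π₁.node) 1 f ?_ hf N
      intro q
      have : (List.range 1).map f = [f 0] := rfl
      rw [this, hb]
      rfl

/-- Two-premise rule application. -/
def rule2 (c : Bool) (s : Sequent) (r : RuleTag) (π₁ π₂ : InfProof c)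
    (h : Rules c s r (some (rootSeq π₁)) (some (rootSeq π₂))) : InfProof c where
  node := node2 s r π₁.node π₂.node
  root_isSome := rfl
  closed p i hp := by
    cases p with
    | nil => simp [node2] at hp
    | cons b q =>
      cases b with
      | false => exact π₁.closed q i hp
      | true => exact π₂.closed q i hp
  correct p s' r' hp := by
    cases p with
    | nil =>
      simp only [node2] at hp
      obtain ⟨rfl, rfl⟩ : s' = s ∧ r' = r := by
        injection hp with hp; exact ⟨(congrArg Prod.fst hp).symm, (congrArg Prod.snd hp).symm⟩
      simpa [node2, mapFst_root] using h
    | cons b q =>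
      cases b with
      | false => exact π₁.correct q s' r' hp
      | true => exact π₂.correct q s' r' hp
  guard f hf N := by
    cases hb : f 0 with
    | true =>
      refine guard_of_shift π₂ (node2 s r π₁.node π₂.node) 1 f ?_ hf N
      intro q
      have : (List.range 1).map f = [f 0] := rfl
      rw [this, hb]; rfl
    | false =>
      refine guard_of_shift π₁ (node2 s r π₁.node π₂.node) 1 f ?_ hf N
      intro q
      have : (List.range 1).map f = [f 0] := rfl
      rw [this, hb]; rfl

@[simp] lemma rootSeq_leaf (c s r h) : rootSeq (leaf c s r h) = s := rfl
@[simp] lemma rootSeq_rule1 (c s r π₁ h) : rootSeq (rule1 c s r π₁ h) = s := rfl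
@[simp] lemma rootSeq_rule2 (c s r π₁ π₂ h) : rootSeq (rule2 c s r π₁ π₂ h) = s := rfl

end GrzAux
namespace GrzAux

/-- A finite ∞-proof of `A, Γ ⇒ A, Δ` for an arbitrary formula `A`. -/
def idTreeAux (c : Bool) : (A : Fml) → (Γ Δ : Multiset Fml) →
    {π : InfProof c // rootSeq π = (A ::ₘ Γ, A ::ₘ Δ)}
  | Fml.bot, Γ, Δ =>
      ⟨leaf c (Fml.bot ::ₘ Γ, Fml.bot ::ₘ Δ) RuleTag.axBot
        (Rules.axBot c Γ (Fml.bot ::ₘ Δ)), rfl⟩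
  | Fml.var p, Γ, Δ =>
      ⟨leaf c (Fml.var p ::ₘ Γ, Fml.var p ::ₘ Δ) RuleTag.ax (Rules.ax c Γ Δ p), rfl⟩
  | Fml.imp A B, Γ, Δ =>
      ⟨rule1 c (Fml.imp A B ::ₘ Γ, Fml.imp A B ::ₘ Δ) RuleTag.impR
        (rule2 c (A ::ₘ Fml.imp A B ::ₘ Γ, B ::ₘ Δ) RuleTag.impL
          (idTreeAux c B (A ::ₘ Γ) Δ).1 (idTreeAux c A Γ (B ::ₘ Δ)).1
          (by
            rw [(idTreeAux c B (A ::ₘ Γ) Δ).2, (idTreeAux c A Γ (B ::ₘ Δ)).2]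
            have := Rules.impL c (A ::ₘ Γ) (B ::ₘ Δ) A B
            rwa [Multiset.cons_swap] at this))
        (Rules.impR c (Fml.imp A B ::ₘ Γ) Δ A B), rfl⟩
  | Fml.box B, Γ, Δ =>
      ⟨rule2 c (Fml.box B ::ₘ Γ, Fml.box B ::ₘ Δ) RuleTag.box
        (rule1 c (Fml.box B ::ₘ Γ, B ::ₘ Δ) RuleTag.refl
          (idTreeAux c B (Fml.box B ::ₘ Γ) Δ).1
          (by
            rw [(idTreeAux c B (Fml.box B ::ₘ Γ) Δ).2]
            exact Rules.refl c Γ (B ::ₘ Δ) B))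
        (rule1 c ({Fml.box B}, {B}) RuleTag.refl
          (idTreeAux c B {Fml.box B} 0).1
          (by
            rw [(idTreeAux c B {Fml.box B} 0).2]
            simpa using Rules.refl c 0 {B} B))
        (by
          rw [rootSeq_rule1, rootSeq_rule1]
          have h0 : Γ + ({B} : Multiset Fml).map Fml.box = Fml.box B ::ₘ Γ := by
            rw [Multiset.map_singleton, add_comm, Multiset.singleton_add]
          have := Rules.box c Γ {B} Δ B
          rw [h0, Multiset.map_singleton] at this
          exact this), rfl⟩

/-- The identity ∞-proof. -/
def idTree (c : Bool) (A : Fml) (Γ Δ : Multiset Fml) : InfProof c := (idTreeAux c A Γ Δ).1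

@[simp] lemma idTree_root (c : Bool) (A : Fml) (Γ Δ : Multiset Fml) :
    rootSeq (idTree c A Γ Δ) = (A ::ₘ Γ, A ::ₘ Δ) := (idTreeAux c A Γ Δ).2

end GrzAux
namespace GrzAux

lemma countBR_nil {c : Bool} (π : InfProof c) : countBR π [] = 0 := rfl

lemma countBR_append {c : Bool} (π : InfProof c) (p : List Bool) (x : Bool) :
    countBR π (p ++ [x]) = countBR π p +
      (if x = true ∧ (π.node p).map Prod.snd = some RuleTag.box then 1 else 0) := by
  unfold countBR
  have hlen : (p ++ [x]).length = p.length + 1 := by simp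
  rw [hlen, List.range_succ, List.filter_append, List.length_append]
  congr 1
  · apply congrArg List.length
    apply List.filter_congr
    intro a ha
    rw [List.mem_range] at ha
    rw [List.getD_append _ _ _ _ ha,
      List.take_append_of_le_length (le_of_lt ha)]
  · have h1 : (p ++ [x]).getD p.length false = x := by
      rw [List.getD_append_right _ _ _ _ (le_refl _)]
      simp
    have h2 : (p ++ [x]).take p.length = p := List.take_left
    by_cases ht : (π.node p).map Prod.snd = some RuleTag.box
    · cases x <;> simp [List.filter, h1, h2, ht]
    · cases x <;> simp [List.filter, h1, h2, ht]

lemma countBR_append_false {c : Bool} (π : InfProof c) (p : List Bool) :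
    countBR π (p ++ [false]) = countBR π p := by
  rw [countBR_append]; simp

lemma countBR_append_true_box {c : Bool} (π : InfProof c) (p : List Bool)
    (h : (π.node p).map Prod.snd = some RuleTag.box) :
    countBR π (p ++ [true]) = countBR π p + 1 := by
  rw [countBR_append]; simp [h]

lemma countBR_append_true_nonbox {c : Bool} (π : InfProof c) (p : List Bool)
    (h : ¬ (π.node p).map Prod.snd = some RuleTag.box) :
    countBR π (p ++ [true]) = countBR π p := by
  rw [countBR_append]; simp [h]

lemma countBR_append_le {c : Bool} (π : InfProof c) (p : List Bool) (x : Bool) :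
    countBR π p ≤ countBR π (p ++ [x]) := by
  rw [countBR_append]; exact Nat.le_add_right _ _

/-- The node function of the weakening of `π` by `Γ'`, `Δ'`. -/
def wkNode {c : Bool} (π : InfProof c) (Γ' Δ' : Multiset Fml)
    (p : List Bool) : Option (Sequent × RuleTag) :=
  (π.node p).map (fun x =>
    (if countBR π p = 0 then (x.1.1 + Γ', x.1.2 + Δ') else x.1, x.2))

lemma wkNode_mapSnd {c : Bool} (π : InfProof c) (Γ' Δ' : Multiset Fml) (p : List Bool) :
    (wkNode π Γ' Δ' p).map Prod.snd = (π.node p).map Prod.snd := by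
  unfold wkNode; cases π.node p <;> rfl

lemma wkNode_mapFst {c : Bool} (π : InfProof c) (Γ' Δ' : Multiset Fml) (p : List Bool) :
    (wkNode π Γ' Δ' p).map Prod.fst =
      ((π.node p).map Prod.fst).map
        (fun s => if countBR π p = 0 then (s.1 + Γ', s.2 + Δ') else s) := by
  unfold wkNode; cases π.node p <;> rfl

lemma wkNode_mapFst_zero {c : Bool} (π : InfProof c) (Γ' Δ' : Multiset Fml)
    (p : List Bool) (h0 : countBR π p = 0) {t : Sequent}
    (h : (π.node p).map Prod.fst = some t) :
    (wkNode π Γ' Δ' p).map Prod.fst = some (t.1 + Γ', t.2 + Δ') := by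
  rw [wkNode_mapFst, h]; simp [h0]

lemma wkNode_mapFst_pos {c : Bool} (π : InfProof c) (Γ' Δ' : Multiset Fml)
    (p : List Bool) (h0 : ¬ countBR π p = 0) :
    (wkNode π Γ' Δ' p).map Prod.fst = (π.node p).map Prod.fst := by
  rw [wkNode_mapFst]; cases (π.node p).map Prod.fst <;> simp [h0]

lemma wkNode_none {c : Bool} (π : InfProof c) (Γ' Δ' : Multiset Fml) (p : List Bool) :
    wkNode π Γ' Δ' p = none ↔ π.node p = none := by
  unfold wkNode; cases π.node p <;> simp

/-- Weakening of an ∞-proof: the contexts `Γ'`, `Δ'` are added to every node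
lying strictly before any right premise of `(□)`. -/
def weaken {c : Bool} (π : InfProof c) (Γ' Δ' : Multiset Fml) : InfProof c where
  node := wkNode π Γ' Δ'
  root_isSome := by
    unfold wkNode
    obtain ⟨r, h⟩ := exists_root π
    simp [h]
  closed p i hp := by
    rw [wkNode_none] at hp ⊢
    exact π.closed p i hp
  correct p s r hp := by
    unfold wkNode at hp
    cases hnode : π.node p with
    | none => rw [hnode] at hp; simp at hp
    | some x =>
      rw [hnode] at hp
      obtain ⟨s₀, r₀⟩ := x
      simp only [Option.map_some] at hp
      obtain ⟨hs, hr⟩ : (if countBR π p = 0 then (s₀.1 + Γ', s₀.2 + Δ') else s₀) = s ∧ r₀ = r := by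
        injection hp with hp; exact ⟨congrArg Prod.fst hp, congrArg Prod.snd hp⟩
      subst hr
      have H := π.correct p s₀ r₀ hnode
      revert H
      generalize hP1 : (π.node (p ++ [false])).map Prod.fst = P1
      generalize hP2 : (π.node (p ++ [true])).map Prod.fst = P2
      intro H
      by_cases h0 : countBR π p = 0
      · rw [if_pos h0] at hs
        subst hs
        have hf0 : countBR π (p ++ [false]) = 0 := by
          rw [countBR_append_false]; exact h0
        cases H with
        | ax c Γ Δ q =>
          rw [wkNode_mapFst, hP1, wkNode_mapFst, hP2]
          simp only [Option.map_none]
          have := Rules.ax c (Γ + Γ') (Δ + Δ') q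
          simpa [Multiset.cons_add] using this
        | axBot c Γ Δ =>
          rw [wkNode_mapFst, hP1, wkNode_mapFst, hP2]
          simp only [Option.map_none]
          have := Rules.axBot c (Γ + Γ') (Δ + Δ')
          simpa [Multiset.cons_add] using this
        | impL c Γ Δ A B =>
          have ht : countBR π (p ++ [true]) = 0 := by
            rw [countBR_append_true_nonbox π p (by rw [hnode]; simp)]; exact h0
          rw [wkNode_mapFst_zero π Γ' Δ' _ hf0 hP1,
            wkNode_mapFst_zero π Γ' Δ' _ ht hP2]
          have := Rules.impL c (Γ + Γ') (Δ + Δ') A B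
          simpa [Multiset.cons_add] using this
        | impR c Γ Δ A B =>
          rw [wkNode_mapFst_zero π Γ' Δ' _ hf0 hP1, wkNode_mapFst, hP2]
          simp only [Option.map_none]
          have := Rules.impR c (Γ + Γ') (Δ + Δ') A B
          simpa [Multiset.cons_add] using this
        | refl c Γ Δ B =>
          rw [wkNode_mapFst_zero π Γ' Δ' _ hf0 hP1, wkNode_mapFst, hP2]
          simp only [Option.map_none]
          have := Rules.refl c (Γ + Γ') (Δ + Δ') B
          simpa [Multiset.cons_add] using this
        | box c Γ Φ Δ A =>
          have hbx : (π.node p).map Prod.snd = some RuleTag.box := by rw [hnode]; rfl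
          have ht : ¬ countBR π (p ++ [true]) = 0 := by
            rw [countBR_append_true_box π p hbx]; omega
          rw [wkNode_mapFst_zero π Γ' Δ' _ hf0 hP1,
            wkNode_mapFst_pos π Γ' Δ' _ ht, hP2]
          have := Rules.box c (Γ + Γ') Φ (Δ + Δ') A
          have he : Γ + Γ' + Multiset.map Fml.box Φ = Γ + Multiset.map Fml.box Φ + Γ' := by
            simp [add_assoc, add_comm]
          rw [he] at this
          simpa [Multiset.cons_add] using this
        | cut Γ Δ A =>
          have ht : countBR π (p ++ [true]) = 0 := by
            rw [countBR_append_true_nonbox π p (by rw [hnode]; simp)]; exact h0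
          rw [wkNode_mapFst_zero π Γ' Δ' _ hf0 hP1,
            wkNode_mapFst_zero π Γ' Δ' _ ht hP2]
          have := Rules.cut (Γ + Γ') (Δ + Δ') A
          simpa [Multiset.cons_add] using this
      · rw [if_neg h0] at hs
        subst hs
        have hf : ¬ countBR π (p ++ [false]) = 0 := by
          rw [countBR_append_false]; exact h0
        have ht : ¬ countBR π (p ++ [true]) = 0 := by
          intro hcontra
          exact h0 (Nat.eq_zero_of_le_zero (hcontra ▸ countBR_append_le π p true))
        rw [wkNode_mapFst_pos π Γ' Δ' _ hf, wkNode_mapFst_pos π Γ' Δ' _ ht, hP1, hP2]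
        exact H
  guard f hf N := by
    have hf' : ∀ n, (π.node ((List.range n).map f)).isSome := by
      intro n
      have := hf n
      unfold wkNode at this
      cases h : π.node ((List.range n).map f) with
      | none => rw [h] at this; simp at this
      | some x => rfl
    obtain ⟨n, hn, hfn, ht⟩ := π.guard f hf' N
    exact ⟨n, hn, hfn, by rw [wkNode_mapSnd]; exact ht⟩

lemma weaken_root {c : Bool} (π : InfProof c) (Γ' Δ' : Multiset Fml) :
    rootSeq (weaken π Γ' Δ') = ((rootSeq π).1 + Γ', (rootSeq π).2 + Δ') := by
  obtain ⟨r, h⟩ := exists_root π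
  have hn : (weaken π Γ' Δ').node [] =
      some ((((rootSeq π).1 + Γ', (rootSeq π).2 + Δ')), r) := by
    show wkNode π Γ' Δ' [] = _
    unfold wkNode
    rw [h, countBR_nil]
    rfl
  rw [rootSeq, hn]
  rfl

end GrzAux
namespace GrzAux

/-- Node function of the ∞-proof `δ` of `□Φ ⇒ A` built corecursively from a
proof `ρ` of `□(A → □A), □Φ ⇒ A`. -/
def dNode (Φ : Multiset Fml) (A : Fml) (ρ : InfProof true) :
    List Bool → Option (Sequent × RuleTag)
  | [] => some ((Φ.map Fml.box, {A}), RuleTag.cut)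
  | true :: q => ρ.node q
  | [false] => some ((Φ.map Fml.box,
      Fml.box (Fml.imp A (Fml.box A)) ::ₘ {A}), RuleTag.box)
  | [false, false] => some ((Φ.map Fml.box, Fml.imp A (Fml.box A) ::ₘ {A}), RuleTag.impR)
  | [false, true] => some ((Φ.map Fml.box, {Fml.imp A (Fml.box A)}), RuleTag.impR)
  | false :: _ :: true :: _ => none
  | [false, false, false] => some ((A ::ₘ Φ.map Fml.box, Fml.box A ::ₘ {A}), RuleTag.box)
  | [false, true, false] => some ((A ::ₘ Φ.map Fml.box, {Fml.box A}), RuleTag.box)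
  | false :: false :: false :: false :: q => (idTree true A (Φ.map Fml.box) {A}).node q
  | false :: false :: false :: true :: q => dNode Φ A ρ q
  | false :: true :: false :: false :: q => (idTree true A (Φ.map Fml.box) 0).node q
  | false :: true :: false :: true :: q => dNode Φ A ρ q

lemma some_pair_inj {s₀ s : Sequent} {r₀ r : RuleTag}
    (h : (some (s₀, r₀) : Option (Sequent × RuleTag)) = some (s, r)) : s = s₀ ∧ r = r₀ := by
  injection h with h
  exact ⟨(congrArg Prod.fst h).symm, (congrArg Prod.snd h).symm⟩

theorem dClosed (Φ : Multiset Fml) (A : Fml) (ρ : InfProof true) :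
    ∀ (p : List Bool) (i : Bool), dNode Φ A ρ p = none → dNode Φ A ρ (p ++ [i]) = none
  | [], i, h => nomatch h
  | true :: q, i, h => ρ.closed q i h
  | [false], i, h => nomatch h
  | [false, false], i, h => nomatch h
  | [false, true], i, h => nomatch h
  | false :: b :: true :: q, i, h => by cases b <;> rfl
  | [false, false, false], i, h => nomatch h
  | [false, true, false], i, h => nomatch h
  | false :: false :: false :: false :: q, i, h =>
      (idTree true A (Φ.map Fml.box) {A}).closed q i h
  | false :: false :: false :: true :: q, i, h => dClosed Φ A ρ q i h
  | false :: true :: false :: false :: q, i, h =>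
      (idTree true A (Φ.map Fml.box) 0).closed q i h
  | false :: true :: false :: true :: q, i, h => dClosed Φ A ρ q i h

theorem dCorrect (Φ : Multiset Fml) (A : Fml) (ρ : InfProof true)
    (hρ : rootSeq ρ = (Fml.box (Fml.imp A (Fml.box A)) ::ₘ Φ.map Fml.box, {A})) :
    ∀ (p : List Bool) (s : Sequent) (r : RuleTag), dNode Φ A ρ p = some (s, r) →
      Rules true s r ((dNode Φ A ρ (p ++ [false])).map Prod.fst)
        ((dNode Φ A ρ (p ++ [true])).map Prod.fst)
  | [], s, r, h => by
      obtain ⟨rfl, rfl⟩ := some_pair_inj h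
      have h2 : (dNode Φ A ρ ([] ++ [true])).map Prod.fst =
          some (Fml.box (Fml.imp A (Fml.box A)) ::ₘ Φ.map Fml.box, {A}) := by
        show (ρ.node []).map Prod.fst = _
        rw [mapFst_root, hρ]
      rw [h2]
      exact Rules.cut (Φ.map Fml.box) {A} (Fml.box (Fml.imp A (Fml.box A)))
  | true :: q, s, r, h => ρ.correct q s r h
  | [false], s, r, h => by
      obtain ⟨rfl, rfl⟩ := some_pair_inj h
      have := Rules.box true 0 Φ {A} (Fml.imp A (Fml.box A))
      rwa [zero_add] at this
  | [false, false], s, r, h => by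
      obtain ⟨rfl, rfl⟩ := some_pair_inj h
      exact Rules.impR true (Φ.map Fml.box) {A} A (Fml.box A)
  | [false, true], s, r, h => by
      obtain ⟨rfl, rfl⟩ := some_pair_inj h
      exact Rules.impR true (Φ.map Fml.box) 0 A (Fml.box A)
  | false :: b :: true :: q, s, r, h => by cases b <;> exact (Option.some_ne_none _ (show (none : Option (Sequent × RuleTag)) = some (s, r) from h).symm).elim
  | [false, false, false], s, r, h => by
      obtain ⟨rfl, rfl⟩ := some_pair_inj h
      have h1 : (dNode Φ A ρ ([false, false, false] ++ [false])).map Prod.fst =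
          some (A ::ₘ Φ.map Fml.box, A ::ₘ {A}) := by
        show ((idTree true A (Φ.map Fml.box) {A}).node []).map Prod.fst = _
        rw [mapFst_root, idTree_root]
      rw [h1]
      have := Rules.box true {A} Φ {A} A
      rwa [Multiset.singleton_add] at this
  | [false, true, false], s, r, h => by
      obtain ⟨rfl, rfl⟩ := some_pair_inj h
      have h1 : (dNode Φ A ρ ([false, true, false] ++ [false])).map Prod.fst =
          some (A ::ₘ Φ.map Fml.box, A ::ₘ 0) := by
        show ((idTree true A (Φ.map Fml.box) 0).node []).map Prod.fst = _
        rw [mapFst_root, idTree_root]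
      rw [h1]
      have := Rules.box true {A} Φ 0 A
      rwa [Multiset.singleton_add] at this
  | false :: false :: false :: false :: q, s, r, h =>
      (idTree true A (Φ.map Fml.box) {A}).correct q s r h
  | false :: false :: false :: true :: q, s, r, h => dCorrect Φ A ρ hρ q s r h
  | false :: true :: false :: false :: q, s, r, h =>
      (idTree true A (Φ.map Fml.box) 0).correct q s r h
  | false :: true :: false :: true :: q, s, r, h => dCorrect Φ A ρ hρ q s r h

theorem dGuard (Φ : Multiset Fml) (A : Fml) (ρ : InfProof true) :
    ∀ (N : ℕ) (f : ℕ → Bool), (∀ n, (dNode Φ A ρ ((List.range n).map f)).isSome) →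
      ∃ n, N ≤ n ∧ f n = true ∧
        (dNode Φ A ρ ((List.range n).map f)).map Prod.snd = some RuleTag.box := by
  intro N
  induction N using Nat.strong_induction_on with
  | _ N IH =>
    intro f hf
    have e3 : (List.range 3).map f = [f 0, f 1, f 2] := rfl
    have e4 : ∀ q, (List.range 4).map f ++ q = f 0 :: f 1 :: f 2 :: f 3 :: q := fun q => rfl
    cases hb0 : f 0 with
    | true =>
      refine guard_of_shift ρ (dNode Φ A ρ) 1 f (fun q => ?_) hf N
      rw [show (List.range 1).map f ++ q = f 0 :: q from rfl, hb0]
      rfl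
    | false =>
      cases hb1 : f 1 with
      | true =>
        have hb2 : f 2 = false := by
          cases hb2 : f 2 with
          | false => rfl
          | true =>
            have h3 := hf 3
            rw [e3, hb0, hb1, hb2] at h3
            exact absurd h3 (by rw [show dNode Φ A ρ [false, true, true] = none from rfl]; simp)
        cases hb3 : f 3 with
        | false =>
          refine guard_of_shift (idTree true A (Φ.map Fml.box) 0) (dNode Φ A ρ) 4 f
            (fun q => ?_) hf N
          rw [e4 q, hb0, hb1, hb2, hb3]
          rfl
        | true =>
          rcases Nat.lt_or_ge N 4 with hN | hN
          · refine ⟨3, by omega, hb3, ?_⟩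
            rw [e3, hb0, hb1, hb2]
            rfl
          · obtain ⟨n, hn, hfn, ht⟩ := IH (N-4) (by omega) (fun i => f (4+i))
              (fun n => by
                have h4 := hf (4+n)
                rw [prefix_add f 4 n, e4, hb0, hb1, hb2, hb3] at h4
                exact h4)
            refine ⟨4+n, by omega, hfn, ?_⟩
            rw [prefix_add f 4 n, e4, hb0, hb1, hb2, hb3]
            exact ht
      | false =>
        have hb2 : f 2 = false := by
          cases hb2 : f 2 with
          | false => rfl
          | true =>
            have h3 := hf 3
            rw [e3, hb0, hb1, hb2] at h3
            exact absurd h3 (by rw [show dNode Φ A ρ [false, false, true] = none from rfl]; simp)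
        cases hb3 : f 3 with
        | false =>
          refine guard_of_shift (idTree true A (Φ.map Fml.box) {A}) (dNode Φ A ρ) 4 f
            (fun q => ?_) hf N
          rw [e4 q, hb0, hb1, hb2, hb3]
          rfl
        | true =>
          rcases Nat.lt_or_ge N 4 with hN | hN
          · refine ⟨3, by omega, hb3, ?_⟩
            rw [e3, hb0, hb1, hb2]
            rfl
          · obtain ⟨n, hn, hfn, ht⟩ := IH (N-4) (by omega) (fun i => f (4+i))
              (fun n => by
                have h4 := hf (4+n)
                rw [prefix_add f 4 n, e4, hb0, hb1, hb2, hb3] at h4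
                exact h4)
            refine ⟨4+n, by omega, hfn, ?_⟩
            rw [prefix_add f 4 n, e4, hb0, hb1, hb2, hb3]
            exact ht

/-- The corecursively built ∞-proof `δ` of `□Φ ⇒ A`. -/
def dProof (Φ : Multiset Fml) (A : Fml) (ρ : InfProof true)
    (hρ : rootSeq ρ = (Fml.box (Fml.imp A (Fml.box A)) ::ₘ Φ.map Fml.box, {A})) :
    InfProof true where
  node := dNode Φ A ρ
  root_isSome := rfl
  closed := dClosed Φ A ρ
  correct := fun p s r h => dCorrect Φ A ρ hρ p s r h
  guard := fun f hf N => dGuard Φ A ρ N f hf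

@[simp] lemma dProof_root (Φ : Multiset Fml) (A : Fml) (ρ : InfProof true) (hρ) :
    rootSeq (dProof Φ A ρ hρ) = (Φ.map Fml.box, {A}) := rfl

end GrzAux
namespace GrzAux

theorem toInf {c : Bool} {s : Sequent} (h : GrzSeq c s) : ProvableInf true s := by
  induction h with
  | ax c Γ Δ A =>
    exact ⟨idTree true A Γ Δ, idTree_root true A Γ Δ⟩
  | axBot c Γ Δ =>
    exact ⟨leaf true (Fml.bot ::ₘ Γ, Δ) RuleTag.axBot (Rules.axBot true Γ Δ), rfl⟩
  | impL h1 h2 ih1 ih2 =>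
    rename_i c Γ Δ A B
    obtain ⟨π₁, hπ₁⟩ := ih1
    obtain ⟨π₂, hπ₂⟩ := ih2
    exact ⟨rule2 true (Fml.imp A B ::ₘ Γ, Δ) RuleTag.impL π₁ π₂
      (by rw [hπ₁, hπ₂]; exact Rules.impL true Γ Δ A B), rfl⟩
  | impR h1 ih1 =>
    rename_i c Γ Δ A B
    obtain ⟨π₁, hπ₁⟩ := ih1
    exact ⟨rule1 true (Γ, Fml.imp A B ::ₘ Δ) RuleTag.impR π₁
      (by rw [hπ₁]; exact Rules.impR true Γ Δ A B), rfl⟩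
  | refl h1 ih1 =>
    rename_i c Γ Δ B
    obtain ⟨π₁, hπ₁⟩ := ih1
    exact ⟨rule1 true (Fml.box B ::ₘ Γ, Δ) RuleTag.refl π₁
      (by rw [hπ₁]; exact Rules.refl true Γ Δ B), rfl⟩
  | boxGrz Γ Δ h1 ih1 =>
    rename_i c Φ A
    obtain ⟨ρ, hρ⟩ := ih1
    refine ⟨rule2 true (Γ + Φ.map Fml.box, Fml.box A ::ₘ Δ) RuleTag.box
      (weaken (dProof Φ A ρ hρ) Γ Δ) (dProof Φ A ρ hρ) ?_, rfl⟩
    rw [weaken_root, dProof_root]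
    rw [add_comm (Multiset.map Fml.box Φ) Γ, Multiset.singleton_add]
    exact Rules.box true Γ Φ Δ A
  | cut h1 h2 ih1 ih2 =>
    rename_i Γ Δ A
    obtain ⟨π₁, hπ₁⟩ := ih1
    obtain ⟨π₂, hπ₂⟩ := ih2
    exact ⟨rule2 true (Γ, Δ) RuleTag.cut π₁ π₂
      (by rw [hπ₁, hπ₂]; exact Rules.cut Γ Δ A), rfl⟩

end GrzAux

/-- If a sequent is provable in `Grz_Seq + cut`, then it is provable in
`Grz_∞ + cut`. -/
theorem grzSeq_cut_to_grzInf_cut (s : Sequent) (h : GrzSeq true s) :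
    ProvableInf true s := GrzAux.toInf h
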